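/- Distinct maximal abstract paths of a word are disjoint: for every position i of a word σ over a pushdown alphabet, there is exactly one maximal abstract path of σ visiting position i. -/

import Mathlib

inductive SymKind where
  | call | ret | intl
deriving DecidableEq

/-- Well-matched words over a pushdown alphabet, where `k` assigns to each
letter its kind (call, return, or internal). -/
inductive WellMatched {A : Type*} (k : A → SymKind) : List A → Prop
  | nil : WellMatched k []
  | int {a : A} {s : List A} : k a = SymKind.intl → WellMatched k s →
      WellMatched k (a :: s)
  | matched {c r : A} {s s' : List A} : k c = SymKind.call → k r = SymKind.ret →
      WellMatched k s → WellMatched k s' →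
      WellMatched k (c :: (s ++ r :: s'))

/-- Number of call symbols in a finite word. -/
def callCount {A : Type*} (k : A → SymKind) (s : List A) : ℕ :=
  s.countP (fun a => decide (k a = SymKind.call))

/-- Number of return symbols in a finite word. -/
def retCount {A : Type*} (k : A → SymKind) (s : List A) : ℕ :=
  s.countP (fun a => decide (k a = SymKind.ret))

/-- The finite subword `σ[i, j-1]` of the infinite word `σ` (letters at
positions `i, i+1, ..., j-1`). -/
def wordSlice {A : Type*} (σ : ℕ → A) (i j : ℕ) : List A :=
  (List.range (j - i)).map fun n => σ (i + n)

/-- `j` is a matching return of position `i`: `j > i`, `j` is a return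
position, and the subword `σ[i+1, j-1]` is well-matched. -/
def MatchRet {A : Type*} (k : A → SymKind) (σ : ℕ → A) (i j : ℕ) : Prop :=
  i < j ∧ k (σ j) = SymKind.ret ∧ WellMatched k (wordSlice σ (i + 1) j)

/-- The abstract-successor relation `SUCC(abs, σ, i) = j`. -/
def AbsSucc {A : Type*} (k : A → SymKind) (σ : ℕ → A) (i j : ℕ) : Prop :=
  if k (σ i) = SymKind.call then MatchRet k σ i j
  else j = i + 1 ∧ k (σ (i + 1)) ≠ SymKind.ret

/-- `j` is a candidate caller of `i`: a call position `j < i` whose abstract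
successor is undefined or greater than `i`. -/
def CallerCand {A : Type*} (k : A → SymKind) (σ : ℕ → A) (i j : ℕ) : Prop :=
  j < i ∧ k (σ j) = SymKind.call ∧ ∀ m, AbsSucc k σ j m → i < m

/-- `j` is the caller of `i`: the greatest candidate caller. -/
def Caller {A : Type*} (k : A → SymKind) (σ : ℕ → A) (i j : ℕ) : Prop :=
  CallerCand k σ i j ∧ ∀ j', CallerCand k σ i j' → j' ≤ j

/-- `S` is a maximal abstract path (MAP): the set of positions reachable via
the abstract successor from a position `i0` with no abstract predecessor. -/
def IsMAP {A : Type*} (k : A → SymKind) (σ : ℕ → A) (S : Set ℕ) : Prop :=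
  ∃ i0, (¬ ∃ p, AbsSucc k σ p i0) ∧
    S = {j | Relation.ReflTransGen (AbsSucc k σ) i0 j}

/-- The set of positions of the (unique) maximal abstract path visiting `i`. -/
def PosA {A : Type*} (k : A → SymKind) (σ : ℕ → A) (i : ℕ) : Set ℕ :=
  {j | Relation.ReflTransGen (AbsSucc k σ) i j ∨
       Relation.ReflTransGen (AbsSucc k σ) j i}

/-- The set of positions of the caller path of `σ` from `i`. -/
def PosC {A : Type*} (k : A → SymKind) (σ : ℕ → A) (i : ℕ) : Set ℕ :=
  {j | Relation.ReflTransGen (fun a b => Caller k σ a b) i j}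

/-!
Every position has at most one abstract predecessor: two calls cannot share a matching return,
since the word strictly between the outer call and the return would contain the inner call
followed by a well-matched word, a suffix with more calls than returns, which a well-matched
word never has. As the abstract successor also strictly increases positions, walking back from
`i` along abstract predecessors is deterministic and terminates at the unique predecessor-free
origin of the path through `i`.
-/

namespace Relation

variable {α : Type*} {r : α → α → Prop}

theorem exists_reflTransGen_of_not_exists_rel (hr : WellFounded r) (a : α) :
    ∃ a₀, (¬ ∃ p, r p a₀) ∧ ReflTransGen r a₀ a := by
  induction a using hr.induction with
  | _ a ih =>
    by_cases h : ∃ p, r p a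
    · obtain ⟨p, hp⟩ := h
      obtain ⟨a₀, ha₀, hpa⟩ := ih p hp
      exact ⟨a₀, ha₀, hpa.tail hp⟩
    · exact ⟨a, h, .refl⟩

theorem ReflTransGen.eq_of_not_exists_rel {a b : α} (hab : ReflTransGen r a b)
    (hb : ¬ ∃ p, r p b) : a = b := by
  rcases hab.cases_tail with rfl | ⟨c, -, hcb⟩
  · rfl
  · exact absurd ⟨c, hcb⟩ hb

theorem eq_of_reflTransGen_of_not_exists_rel (hr : Relator.LeftUnique r) {a b c : α}
    (ha : ¬ ∃ p, r p a) (hb : ¬ ∃ p, r p b) (hac : ReflTransGen r a c)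
    (hbc : ReflTransGen r b c) : a = b := by
  have hU : Relator.RightUnique (Function.swap r) := fun _ _ _ h₁ h₂ => hr h₁ h₂
  rcases ReflTransGen.total_of_right_unique hU (reflTransGen_swap.mpr hac)
      (reflTransGen_swap.mpr hbc) with hab | hba
  · exact ((reflTransGen_swap.mp hab).eq_of_not_exists_rel ha).symm
  · exact (reflTransGen_swap.mp hba).eq_of_not_exists_rel hb

end Relation

section PushdownWords

variable {A : Type*} {k : A → SymKind}

theorem WellMatched.callCount_eq_retCount {s : List A} (h : WellMatched k s) :
    callCount k s = retCount k s := by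
  induction h with
  | nil => rfl
  | int ha _ ih =>
    simpa [callCount, retCount, ha] using ih
  | matched hc hr _ _ ih₁ ih₂ =>
    simp [callCount, retCount, List.countP_append, hc, hr] at *
    omega

theorem WellMatched.callCount_le_retCount_of_suffix {s t : List A} (h : WellMatched k s)
    (ht : t <:+ s) : callCount k t ≤ retCount k t := by
  induction h generalizing t with
  | nil => simp [List.suffix_nil.mp ht, callCount, retCount]
  | int ha hs ih =>
    rcases List.suffix_cons_iff.mp ht with rfl | ht
    · exact ((WellMatched.int ha hs).callCount_eq_retCount).le
    · exact ih ht
  | @matched c r s s' hc hr hs hs' ih ih' =>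
    rcases List.suffix_cons_iff.mp ht with rfl | ⟨u, hu⟩
    · exact ((WellMatched.matched hc hr hs hs').callCount_eq_retCount).le
    rcases List.append_eq_append_iff.mp hu with ⟨v, rfl, rfl⟩ | ⟨v, -, hv⟩
    · have hvle := ih (List.suffix_append u v)
      have hs'eq := hs'.callCount_eq_retCount
      simp [callCount, retCount, List.countP_append, hr] at *
      omega
    · rcases List.suffix_cons_iff.mp ⟨v, hv.symm⟩ with rfl | ht'
      · have hs'eq := hs'.callCount_eq_retCount
        simp [callCount, retCount, hr] at *
        omega
      · exact ih' ht'

theorem wordSlice_eq_cons (σ : ℕ → A) {i j : ℕ} (h : i < j) :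
    wordSlice σ i j = σ i :: wordSlice σ (i + 1) j := by
  unfold wordSlice
  rw [show j - i = j - (i + 1) + 1 by omega, List.range_succ_eq_map]
  simp [Function.comp_def, Nat.add_assoc, Nat.add_comm 1]

theorem wordSlice_append (σ : ℕ → A) {i j l : ℕ} (hij : i ≤ j) (hjl : j ≤ l) :
    wordSlice σ i j ++ wordSlice σ j l = wordSlice σ i l := by
  unfold wordSlice
  rw [show l - i = (j - i) + (l - j) by omega, List.range_add, List.map_append, List.map_map]
  congr 2
  ext n
  simp only [Function.comp_apply]
  congr 1
  omega

theorem MatchRet.le_of_call {σ : ℕ → A} {p q i : ℕ} (hp : MatchRet k σ p i)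
    (hq : MatchRet k σ q i) (hqc : k (σ q) = SymKind.call) : q ≤ p := by
  by_contra! hpq
  obtain ⟨-, -, hwp⟩ := hp
  obtain ⟨hqi, -, hwq⟩ := hq
  have hsuffix : σ q :: wordSlice σ (q + 1) i <:+ wordSlice σ (p + 1) i := by
    rw [← wordSlice_eq_cons σ hqi, ← wordSlice_append σ hpq hqi.le]
    exact List.suffix_append _ _
  have hle := hwp.callCount_le_retCount_of_suffix hsuffix
  have heq := hwq.callCount_eq_retCount
  simp [callCount, retCount, hqc] at hle heq
  omega

theorem absSucc_lt {σ : ℕ → A} {p q : ℕ} (h : AbsSucc k σ p q) : p < q := by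
  unfold AbsSucc at h
  split at h
  · exact h.1
  · omega

theorem absSucc_leftUnique (σ : ℕ → A) : Relator.LeftUnique (AbsSucc k σ) := by
  intro p q i hp hq
  unfold AbsSucc at hp hq
  split at hp <;> split at hq
  case isTrue.isTrue hpc hqc =>
    exact le_antisymm (hq.le_of_call hp hpc) (hp.le_of_call hq hqc)
  case isTrue.isFalse => exact absurd hp.2.1 (hq.1 ▸ hq.2)
  case isFalse.isTrue => exact absurd hq.2.1 (hp.1 ▸ hp.2)
  case isFalse.isFalse => omega

theorem wellFounded_absSucc (σ : ℕ → A) : WellFounded (AbsSucc k σ) :=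
  Subrelation.wf (fun h => absSucc_lt h) wellFounded_lt

end PushdownWords

/-- for every position `i` there is exactly one maximal abstract
path visiting `i`. -/
theorem map_unique {A : Type*} (k : A → SymKind) (σ : ℕ → A) (i : ℕ) :
    ∃! S : Set ℕ, IsMAP k σ S ∧ i ∈ S := by
  obtain ⟨i₀, hi₀, hi₀i⟩ :=
    Relation.exists_reflTransGen_of_not_exists_rel (wellFounded_absSucc σ) i
  refine ⟨{j | Relation.ReflTransGen (AbsSucc k σ) i₀ j}, ⟨⟨i₀, hi₀, rfl⟩, hi₀i⟩, ?_⟩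
  rintro S ⟨⟨i₁, hi₁, rfl⟩, hi₁i⟩
  obtain rfl : i₁ = i₀ :=
    Relation.eq_of_reflTransGen_of_not_exists_rel (absSucc_leftUnique σ) hi₁ hi₀ hi₁i hi₀i
  rfl
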